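/- arXiv:2509.08466 — 5 statements merged into one kernel-verified Lean document; each statement's English description precedes it below -/
import Mathlib

section
/- Let ρ : (0,∞) → [0,∞) be a nonnegative function in L¹((0,∞)) with ‖ρ‖_{L¹} < 1, and let r : (0,∞) → [0,∞) be a nonnegative function in L¹((0,∞)) satisfying the linear Volterra equation r(t) = ρ(t) + ∫_0^t r(t−s) ρ(s) ds for almost every t > 0. Then for every T > 0 and every κ ∈ (0,1): ∫_T^∞ r(t) dt ≤ ‖r‖_{L¹} · T^{−log(1/‖ρ‖_{L¹})} + ((1 + 2‖r‖_{L¹}) / (1 − ‖ρ‖_{L¹})) · ∫_{κ T^{1+log(1−κ)}}^∞ ρ(t) dt, where log denotes the natural logarithm. -/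
/-!
Write `F x = ∫_x^∞ r`, `P x = ∫_x^∞ ρ`, `A = ‖ρ‖_{L¹}` and `R = ‖r‖_{L¹}`. Integrating the equation
over `(a + b, ∞)` and splitting the convolution according to whether `s ≤ a` (then `t - s > b`) or
`s > a` gives `F (a + b) ≤ P (a + b) + A F b + R P a` (Tonelli and translation invariance). With
`a = κ x`, `b = (1 - κ) x` this reads `F x ≤ (1 + R) P (κ x) + A F ((1 - κ) x)`. Iterating it
`n = ⌈log T⌉` times from `x = T` leaves `Aⁿ F ((1 - κ)ⁿ T) ≤ R T^{log A}` plus a geometric series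
of tails of `ρ`, all taken at points `κ (1 - κ)ᵏ T ≥ κ (1 - κ)^{log T} T = κ T^{1 + log (1 - κ)}`.
-/

open MeasureTheory Set
open scoped ENNReal

theorem ofReal_integral_le_lintegral_ofReal {α : Type*} [MeasurableSpace α] {μ : Measure α}
    (f : α → ℝ) : ENNReal.ofReal (∫ x, f x ∂μ) ≤ ∫⁻ x, ENNReal.ofReal (f x) ∂μ := by
  by_cases hf : Integrable f μ
  · refine ENNReal.ofReal_le_of_le_toReal ?_
    rw [integral_eq_lintegral_pos_part_sub_lintegral_neg_part hf]
    exact sub_le_self _ ENNReal.toReal_nonneg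
  · simp [integral_undef hf]

theorem integral_Ioi_nonneg {f : ℝ → ℝ} {a x : ℝ} (hf0 : ∀ t ∈ Ioi a, 0 ≤ f t) (hx : a ≤ x) :
    0 ≤ ∫ t in Ioi x, f t :=
  setIntegral_nonneg measurableSet_Ioi fun t ht => hf0 t (hx.trans_lt ht)

theorem lintegral_Ioi_ofReal_eq {f : ℝ → ℝ} {a x : ℝ} (hf : IntegrableOn f (Ioi a))
    (hf0 : ∀ t ∈ Ioi a, 0 ≤ f t) (hx : a ≤ x) :
    ∫⁻ t in Ioi x, ENNReal.ofReal (f t) = ENNReal.ofReal (∫ t in Ioi x, f t) :=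
  (ofReal_integral_eq_lintegral_ofReal (hf.mono_set (Ioi_subset_Ioi hx))
    (ae_restrict_of_forall_mem measurableSet_Ioi fun t ht => hf0 t (hx.trans_lt ht))).symm

theorem antitoneOn_integral_Ioi {f : ℝ → ℝ} {a : ℝ} (hf : IntegrableOn f (Ioi a))
    (hf0 : ∀ t ∈ Ioi a, 0 ≤ f t) : AntitoneOn (fun x => ∫ t in Ioi x, f t) (Ici a) :=
  fun _ hx _ _ hxy => setIntegral_mono_set (hf.mono_set (Ioi_subset_Ioi hx))
    (ae_restrict_of_forall_mem measurableSet_Ioi fun t ht => hf0 t ((mem_Ici.1 hx).trans_lt ht))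
    (Ioi_subset_Ioi hxy).eventuallyLE

theorem lintegral_Ioi_add_convolution_le {f g : ℝ → ℝ≥0∞} (hf : Measurable f)
    (hg : Measurable g) (a b : ℝ) :
    ∫⁻ t in Ioi (a + b), ∫⁻ s in Ioo 0 t, f (t - s) * g s ≤
      (∫⁻ u in Ioi b, f u) * (∫⁻ s in Ioi 0, g s) + (∫⁻ u in Ioi 0, f u) * ∫⁻ s in Ioi a, g s := by
  set fb := (Ioi b).indicator f
  set f0 := (Ioi 0).indicator f
  set g0 := (Ioi 0).indicator g
  set ga := (Ioi a).indicator g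
  have hfb : Measurable fb := hf.indicator measurableSet_Ioi
  have hf0 : Measurable f0 := hf.indicator measurableSet_Ioi
  have hg0 : Measurable g0 := hg.indicator measurableSet_Ioi
  have hga : Measurable ga := hg.indicator measurableSet_Ioi
  have hdom : ∀ t ∈ Ioi (a + b), ∀ s ∈ Ioo 0 t,
      f (t - s) * g s ≤ fb (t - s) * g0 s + f0 (t - s) * ga s := by
    intro t ht s hs
    rw [mem_Ioi] at ht
    obtain ⟨hs0, hst⟩ := hs
    rcases le_or_gt s a with hsa | hsa
    · have htsb : t - s ∈ Ioi b := by rw [mem_Ioi]; linarith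
      simp only [fb, g0, indicator_of_mem htsb, indicator_of_mem (mem_Ioi.2 hs0)]
      exact le_self_add
    · have hts0 : t - s ∈ Ioi 0 := by rw [mem_Ioi]; linarith
      simp only [f0, ga, indicator_of_mem hts0, indicator_of_mem (mem_Ioi.2 hsa)]
      exact le_add_self
  calc ∫⁻ t in Ioi (a + b), ∫⁻ s in Ioo 0 t, f (t - s) * g s
      ≤ ∫⁻ t, ∫⁻ s, (fb (t - s) * g0 s + f0 (t - s) * ga s) := by
        refine (setLIntegral_mono (by fun_prop) fun t ht => ?_).trans
          (setLIntegral_le_lintegral _ _)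
        exact (setLIntegral_mono (by fun_prop) (hdom t ht)).trans (setLIntegral_le_lintegral _ _)
    _ = ∫⁻ s, ∫⁻ t, (fb (t - s) * g0 s + f0 (t - s) * ga s) :=
        lintegral_lintegral_swap (by fun_prop)
    _ = ∫⁻ s, ((∫⁻ u, fb u) * g0 s + (∫⁻ u, f0 u) * ga s) := by
        congr 1 with s
        rw [lintegral_add_left (by fun_prop), lintegral_mul_const _ (by fun_prop),
          lintegral_mul_const _ (by fun_prop), lintegral_sub_right_eq_self,
          lintegral_sub_right_eq_self]
    _ = _ := by
        rw [lintegral_add_left (by fun_prop), lintegral_const_mul _ hg0, lintegral_const_mul _ hga]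
        simp only [fb, f0, g0, ga, lintegral_indicator measurableSet_Ioi]

theorem ofReal_intervalIntegral_convolution_le {f g : ℝ → ℝ} (hg0 : ∀ s ∈ Ioi (0 : ℝ), 0 ≤ g s)
    {t : ℝ} (ht : 0 ≤ t) :
    ENNReal.ofReal (∫ s in (0 : ℝ)..t, f (t - s) * g s) ≤
      ∫⁻ s in Ioo 0 t, ENNReal.ofReal (f (t - s)) * ENNReal.ofReal (g s) := by
  rw [intervalIntegral.integral_of_le ht, integral_Ioc_eq_integral_Ioo]
  refine (ofReal_integral_le_lintegral_ofReal _).trans_eq ?_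
  exact setLIntegral_congr_fun measurableSet_Ioo fun s hs => ENNReal.ofReal_mul' (hg0 s hs.1)

theorem le_geom_sum_of_le_add_mul_comp {α : Type*} {F G : α → ℝ} {A : ℝ} {q : α → α}
    {s : Set α} (hA : 0 ≤ A) (hq : MapsTo q s s) (h : ∀ x ∈ s, F x ≤ G x + A * F (q x))
    (n : ℕ) {x : α} (hx : x ∈ s) :
    F x ≤ ∑ k ∈ Finset.range n, A ^ k * G (q^[k] x) + A ^ n * F (q^[n] x) := by
  induction n generalizing x with
  | zero => simp
  | succ n ih =>
    calc F x ≤ G x + A * F (q x) := h x hx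
      _ ≤ G x + A * (∑ k ∈ Finset.range n, A ^ k * G (q^[k] (q x)) + A ^ n * F (q^[n] (q x))) := by
          gcongr; exact ih (hq hx)
      _ = _ := by
          simp only [Finset.sum_range_succ', Function.iterate_succ_apply,
            Function.iterate_zero_apply, pow_succ', mul_add, Finset.mul_sum, mul_assoc]
          ring

theorem rpow_log_comm {x y : ℝ} (hx : 0 < x) (hy : 0 < y) :
    x ^ Real.log y = y ^ Real.log x := by
  rw [Real.rpow_def_of_pos hx, Real.rpow_def_of_pos hy, mul_comm]

theorem pow_le_rpow_log {A T : ℝ} {n : ℕ} (hA0 : 0 ≤ A) (hA1 : A ≤ 1) (hT : 0 < T)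
    (hn : Real.log T ≤ n) : A ^ n ≤ T ^ Real.log A := by
  rcases hA0.eq_or_lt with rfl | hA
  · simpa using pow_le_one₀ le_rfl zero_le_one
  · rw [rpow_log_comm hT hA, ← Real.rpow_natCast]
    exact Real.rpow_le_rpow_of_exponent_ge hA hA1 hn

theorem rpow_log_le_pow {q T : ℝ} {k : ℕ} (hq0 : 0 < q) (hq1 : q ≤ 1) (hT : 0 < T)
    (hk : k ≤ Real.log T) : T ^ Real.log q ≤ q ^ k := by
  rw [rpow_log_comm hT hq0, ← Real.rpow_natCast]
  exact Real.rpow_le_rpow_of_exponent_ge hq0 hq1 hk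

structure VolterraSolution (ρ r : ℝ → ℝ) : Prop where
  measurable_kernel : Measurable ρ
  measurable : Measurable r
  kernel_nonneg : ∀ t ∈ Ioi (0 : ℝ), 0 ≤ ρ t
  nonneg : ∀ t ∈ Ioi (0 : ℝ), 0 ≤ r t
  integrableOn_kernel : IntegrableOn ρ (Ioi 0)
  integrableOn : IntegrableOn r (Ioi 0)
  ae_eq : ∀ᵐ t ∂(volume.restrict (Ioi (0 : ℝ))), r t = ρ t + ∫ s in (0 : ℝ)..t, r (t - s) * ρ s

namespace VolterraSolution

variable {ρ r : ℝ → ℝ}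

theorem integral_Ioi_add_le (h : VolterraSolution ρ r) {a b : ℝ} (ha : 0 ≤ a) (hb : 0 ≤ b) :
    (∫ t in Ioi (a + b), r t) ≤ (∫ t in Ioi (a + b), ρ t)
      + (∫ t in Ioi b, r t) * (∫ t in Ioi 0, ρ t) + (∫ t in Ioi 0, r t) * ∫ t in Ioi a, ρ t := by
  obtain ⟨hρmeas, hrmeas, hρ0, hr0, hρint, hrint, hVolterra⟩ := h
  have hab : 0 ≤ a + b := add_nonneg ha hb
  have hFb := integral_Ioi_nonneg hr0 hb
  have hR := integral_Ioi_nonneg hr0 le_rfl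
  have hA := integral_Ioi_nonneg hρ0 le_rfl
  have hPa := integral_Ioi_nonneg hρ0 ha
  have hconv : ∀ᵐ t ∂(volume.restrict (Ioi (a + b))), ENNReal.ofReal (r t - ρ t) ≤
      ∫⁻ s in Ioo 0 t, ENNReal.ofReal (r (t - s)) * ENNReal.ofReal (ρ s) := by
    filter_upwards [ae_restrict_of_ae_restrict_of_subset (Ioi_subset_Ioi hab) hVolterra,
      ae_restrict_mem measurableSet_Ioi] with t heq ht
    rw [heq, add_sub_cancel_left]
    exact ofReal_intervalIntegral_convolution_le hρ0 (hab.trans (le_of_lt ht))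
  have hofReal : ENNReal.ofReal (∫ t in Ioi (a + b), (r t - ρ t)) ≤ ENNReal.ofReal
      ((∫ t in Ioi b, r t) * (∫ t in Ioi 0, ρ t) + (∫ t in Ioi 0, r t) * ∫ t in Ioi a, ρ t) :=
    calc ENNReal.ofReal (∫ t in Ioi (a + b), (r t - ρ t))
        ≤ ∫⁻ t in Ioi (a + b), ENNReal.ofReal (r t - ρ t) :=
          ofReal_integral_le_lintegral_ofReal _
      _ ≤ ∫⁻ t in Ioi (a + b), ∫⁻ s in Ioo 0 t, ENNReal.ofReal (r (t - s)) * ENNReal.ofReal (ρ s) :=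
          lintegral_mono_ae hconv
      _ ≤ _ := lintegral_Ioi_add_convolution_le (f := fun u => ENNReal.ofReal (r u))
          (g := fun s => ENNReal.ofReal (ρ s)) (by fun_prop) (by fun_prop) a b
      _ = _ := by
          rw [lintegral_Ioi_ofReal_eq hrint hr0 hb, lintegral_Ioi_ofReal_eq hrint hr0 le_rfl,
            lintegral_Ioi_ofReal_eq hρint hρ0 le_rfl, lintegral_Ioi_ofReal_eq hρint hρ0 ha,
            ← ENNReal.ofReal_mul hFb, ← ENNReal.ofReal_mul hR,
            ← ENNReal.ofReal_add (mul_nonneg hFb hA) (mul_nonneg hR hPa)]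
  rw [ENNReal.ofReal_le_ofReal_iff (by positivity), integral_sub (hrint.mono_set
    (Ioi_subset_Ioi hab)) (hρint.mono_set (Ioi_subset_Ioi hab))] at hofReal
  linarith

theorem integral_Ioi_le_geom_sum (h : VolterraSolution ρ r) {κ x : ℝ} (hκ0 : 0 ≤ κ)
    (hκ1 : κ ≤ 1) (hx : 0 ≤ x) (n : ℕ) :
    ∫ t in Ioi x, r t ≤ ∑ k ∈ Finset.range n, (∫ t in Ioi 0, ρ t) ^ k *
        ((1 + ∫ t in Ioi 0, r t) * ∫ t in Ioi (κ * ((1 - κ) ^ k * x)), ρ t)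
      + (∫ t in Ioi 0, ρ t) ^ n * ∫ t in Ioi ((1 - κ) ^ n * x), r t := by
  have hstep : ∀ y ∈ Ici (0 : ℝ), ∫ t in Ioi y, r t ≤
      (1 + ∫ t in Ioi 0, r t) * (∫ t in Ioi (κ * y), ρ t)
        + (∫ t in Ioi 0, ρ t) * ∫ t in Ioi ((1 - κ) * y), r t := by
    intro y hy
    have hκy : 0 ≤ κ * y := mul_nonneg hκ0 hy
    have hrec := h.integral_Ioi_add_le hκy (mul_nonneg (sub_nonneg.2 hκ1) hy)
    rw [← add_mul, add_sub_cancel, one_mul] at hrec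
    have hP := antitoneOn_integral_Ioi h.integrableOn_kernel h.kernel_nonneg hκy hy
      (mul_le_of_le_one_left hy hκ1)
    linarith
  simpa only [mul_left_iterate] using le_geom_sum_of_le_add_mul_comp
    (integral_Ioi_nonneg h.kernel_nonneg le_rfl)
    (fun y hy => mul_nonneg (sub_nonneg.2 hκ1) hy) hstep n hx

theorem integral_Ioi_le (h : VolterraSolution ρ r) (hρ1 : ∫ t in Ioi 0, ρ t < 1) {κ x c : ℝ}
    (hκ0 : 0 ≤ κ) (hκ1 : κ ≤ 1) (hx : 0 ≤ x) (hc0 : 0 ≤ c) {n : ℕ}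
    (hc : ∀ k < n, c ≤ κ * ((1 - κ) ^ k * x)) :
    ∫ t in Ioi x, r t ≤ (∫ t in Ioi 0, r t) * (∫ t in Ioi 0, ρ t) ^ n
      + (1 + ∫ t in Ioi 0, r t) / (1 - ∫ t in Ioi 0, ρ t) * ∫ t in Ioi c, ρ t := by
  set A := ∫ t in Ioi 0, ρ t
  set R := ∫ t in Ioi 0, r t
  have hA0 : 0 ≤ A := integral_Ioi_nonneg h.kernel_nonneg le_rfl
  have h1R : 0 ≤ 1 + R := by linarith [integral_Ioi_nonneg h.nonneg le_rfl]
  have hPc : 0 ≤ ∫ t in Ioi c, ρ t := integral_Ioi_nonneg h.kernel_nonneg hc0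
  have hqx : ∀ k : ℕ, 0 ≤ (1 - κ) ^ k * x := fun k =>
    mul_nonneg (pow_nonneg (sub_nonneg.2 hκ1) k) hx
  have hsum : ∑ k ∈ Finset.range n, A ^ k * ((1 + R) * ∫ t in Ioi (κ * ((1 - κ) ^ k * x)), ρ t)
      ≤ (1 + R) / (1 - A) * ∫ t in Ioi c, ρ t := calc
    _ ≤ (∑ k ∈ Finset.range n, A ^ k) * ((1 + R) * ∫ t in Ioi c, ρ t) := by
      rw [Finset.sum_mul]
      gcongr ∑ k ∈ _, A ^ k * (_ * ?_) with k hk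
      exact antitoneOn_integral_Ioi h.integrableOn_kernel h.kernel_nonneg hc0
        (mul_nonneg hκ0 (hqx k)) (hc k (Finset.mem_range.1 hk))
    _ ≤ 1 / (1 - A) * ((1 + R) * ∫ t in Ioi c, ρ t) := by
      gcongr
      simpa using geom_sum_Ico_le_of_lt_one (m := 0) (n := n) hA0 hρ1
    _ = _ := by ring
  have htail : A ^ n * ∫ t in Ioi ((1 - κ) ^ n * x), r t ≤ R * A ^ n := by
    rw [mul_comm]
    gcongr
    exact antitoneOn_integral_Ioi h.integrableOn h.nonneg self_mem_Ici (hqx n) (hqx n)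
  linarith [h.integral_Ioi_le_geom_sum hκ0 hκ1 hx n]

end VolterraSolution

/-- Let `ρ : (0,∞) → [0,∞)` be a nonnegative `L¹` function with
`‖ρ‖_{L¹} < 1`, and let `r : (0,∞) → [0,∞)` be a nonnegative `L¹` function solving the
linear Volterra equation `r(t) = ρ(t) + ∫_0^t r(t−s) ρ(s) ds` for a.e. `t > 0`.  Then for
every `T > 0` and `κ ∈ (0,1)`:
`∫_T^∞ r ≤ ‖r‖_{L¹} · T^{−log(1/‖ρ‖_{L¹})}
      + ((1 + 2‖r‖_{L¹})/(1 − ‖ρ‖_{L¹})) · ∫_{κ T^{1+log(1−κ)}}^∞ ρ`. -/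
theorem volterra_resolvent_tail_estimate
    (ρ r : ℝ → ℝ)
    (hρmeas : Measurable ρ) (hrmeas : Measurable r)
    (hρ0 : ∀ t ∈ Set.Ioi (0 : ℝ), 0 ≤ ρ t)
    (hr0 : ∀ t ∈ Set.Ioi (0 : ℝ), 0 ≤ r t)
    (hρint : IntegrableOn ρ (Set.Ioi 0))
    (hrint : IntegrableOn r (Set.Ioi 0))
    (hρ1 : (∫ t in Set.Ioi (0 : ℝ), ρ t) < 1)
    (hVolterra : ∀ᵐ t ∂(volume.restrict (Set.Ioi (0 : ℝ))),
        r t = ρ t + ∫ s in (0 : ℝ)..t, r (t - s) * ρ s)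
    (T κ : ℝ) (hT : 0 < T) (hκ : κ ∈ Set.Ioo (0 : ℝ) 1) :
    (∫ t in Set.Ioi T, r t) ≤
      (∫ t in Set.Ioi (0 : ℝ), r t) * T ^ (-(Real.log (1 / ∫ t in Set.Ioi (0 : ℝ), ρ t)))
        + ((1 + 2 * ∫ t in Set.Ioi (0 : ℝ), r t) / (1 - ∫ t in Set.Ioi (0 : ℝ), ρ t)) *
            ∫ t in Set.Ioi (κ * T ^ (1 + Real.log (1 - κ))), ρ t := by
  obtain ⟨hκ0, hκ1⟩ := hκ
  have h : VolterraSolution ρ r := ⟨hρmeas, hrmeas, hρ0, hr0, hρint, hrint, hVolterra⟩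
  have hc : ∀ k < ⌈Real.log T⌉₊, κ * T ^ (1 + Real.log (1 - κ)) ≤ κ * ((1 - κ) ^ k * T) := by
    intro k hk
    rw [Real.rpow_add hT, Real.rpow_one, mul_comm T]
    gcongr
    exact rpow_log_le_pow (sub_pos.2 hκ1) (by linarith) hT (Nat.lt_ceil.1 hk).le
  have hbound := h.integral_Ioi_le hρ1 hκ0.le hκ1.le hT.le (by positivity) hc
  have hpow := pow_le_rpow_log (integral_Ioi_nonneg hρ0 le_rfl) hρ1.le hT (Nat.le_ceil _)
  have hR := integral_Ioi_nonneg hr0 le_rfl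
  have hPc := integral_Ioi_nonneg hρ0 (x := κ * T ^ (1 + Real.log (1 - κ))) (by positivity)
  rw [one_div, Real.log_inv, neg_neg]
  refine hbound.trans (add_le_add (by gcongr) ?_)
  gcongr
  linarith
end

section
/- Let μ be a σ-finite Borel measure on [0,∞), V a separable Hilbert space, δ ∈ ℝ and η' < η. Then for every strongly measurable y : [0,∞) → V with |||y|||_{δ,η'} < ∞ and every t > 0: ∫_{[0,∞)} e^{−2xt} ‖y(x)‖_V² w_{δ,η}(x) μ(dx) ≤ max{μ({0}), 1, C(η−η')} · (1 + t^{−(η−η')}) · |||y|||_{δ,η'}², where C(ϱ) = 2^{−ϱ} ϱ^{ϱ} e^{−ϱ}. -/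
open MeasureTheory Set

/-- The weight function `w_{δ,η}` on `[0,∞)`: `w_{δ,η}(0) = 1`, `w_{δ,η}(x) = x^{−δ}` for
`x ∈ (0,1]` and `w_{δ,η}(x) = x^{η}` for `x ∈ (1,∞)`. -/
noncomputable def weightW (δ η x : ℝ) : ℝ :=
  if x = 0 then 1 else if x ≤ 1 then x ^ (-δ) else x ^ η

/-- The constant `C(ϱ) = 2^{−ϱ} ϱ^{ϱ} e^{−ϱ}`. -/
noncomputable def constC (ϱ : ℝ) : ℝ := 2 ^ (-ϱ) * ϱ ^ ϱ * Real.exp (-ϱ)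

/-! On `[0,1]` the two weights agree and `e^{−2xt} ≤ 1`. On `(1,∞)` they differ by the factor
`x^ϱ`, `ϱ = η − η'`, and since `u ↦ u^ϱ e^{−u}` is maximal at `u = ϱ`, substituting `u = 2xt`
gives `e^{−2xt} x^ϱ ≤ C(ϱ) t^{−ϱ}`. Hence `e^{−2xt} w_{δ,η} ≤ (1 + C(ϱ) t^{−ϱ}) w_{δ,η'}`
pointwise, and integrating against `‖y‖²` gives the claim. -/

lemma constC_nonneg {ϱ : ℝ} (hϱ : 0 ≤ ϱ) : 0 ≤ constC ϱ := by
  unfold constC; positivity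

lemma weightW_nonneg (δ η : ℝ) {x : ℝ} (hx : 0 ≤ x) : 0 ≤ weightW δ η x := by
  unfold weightW; split_ifs <;> positivity

theorem Real.rpow_mul_exp_neg_le {u ρ : ℝ} (hu : 0 ≤ u) (hρ : 0 < ρ) :
    u ^ ρ * Real.exp (-u) ≤ ρ ^ ρ * Real.exp (-ρ) := by
  have hdiv : (u / ρ) ^ ρ ≤ Real.exp (u - ρ) := calc
    (u / ρ) ^ ρ ≤ Real.exp (u / ρ - 1) ^ ρ := by
      gcongr; linarith [Real.add_one_le_exp (u / ρ - 1)]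
    _ = Real.exp (u - ρ) := by rw [← Real.exp_mul]; field_simp
  calc u ^ ρ * Real.exp (-u) = (u / ρ) ^ ρ * Real.exp (-u) * ρ ^ ρ := by
        rw [Real.div_rpow hu hρ.le]; field_simp
    _ ≤ Real.exp (u - ρ) * Real.exp (-u) * ρ ^ ρ := by gcongr
    _ = ρ ^ ρ * Real.exp (-ρ) := by rw [← Real.exp_add]; ring_nf

lemma exp_mul_rpow_le_constC {ρ t x : ℝ} (hρ : 0 < ρ) (ht : 0 < t) (hx : 0 ≤ x) :
    Real.exp (-2 * x * t) * x ^ ρ ≤ constC ρ * t ^ (-ρ) := by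
  have hscale : x ^ ρ = (2 * x * t) ^ ρ * (2 ^ (-ρ) * t ^ (-ρ)) := by
    rw [Real.mul_rpow (by positivity) ht.le, Real.mul_rpow (by norm_num) hx,
      Real.rpow_neg (by norm_num), Real.rpow_neg ht.le]
    field_simp
  calc Real.exp (-2 * x * t) * x ^ ρ
      = (2 * x * t) ^ ρ * Real.exp (-(2 * x * t)) * (2 ^ (-ρ) * t ^ (-ρ)) := by
        rw [hscale]; ring_nf
    _ ≤ ρ ^ ρ * Real.exp (-ρ) * (2 ^ (-ρ) * t ^ (-ρ)) := by
        gcongr ?_ * _; exact Real.rpow_mul_exp_neg_le (by positivity) hρ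
    _ = constC ρ * t ^ (-ρ) := by unfold constC; ring

lemma exp_mul_weightW_le (δ : ℝ) {η η' t x : ℝ} (hηη' : η' < η) (ht : 0 < t) (hx : 0 ≤ x) :
    Real.exp (-2 * x * t) * weightW δ η x ≤
      (1 + constC (η - η') * t ^ (-(η - η'))) * weightW δ η' x := by
  have hρ : 0 < η - η' := sub_pos.mpr hηη'
  have hCt : 0 ≤ constC (η - η') * t ^ (-(η - η')) := by
    have := constC_nonneg hρ.le; positivity
  have hw' := weightW_nonneg δ η' hx
  by_cases hx1 : x ≤ 1
  · have hw : weightW δ η x = weightW δ η' x := by unfold weightW; simp [hx1]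
    have he : Real.exp (-2 * x * t) ≤ 1 := Real.exp_le_one_iff.mpr (by nlinarith)
    rw [hw]; nlinarith
  · have hx0 : 0 < x := by linarith
    have hsplit : weightW δ η x = x ^ (η - η') * weightW δ η' x := by
      simp only [weightW, hx0.ne', hx1, if_false, ← Real.rpow_add hx0]; ring_nf
    calc Real.exp (-2 * x * t) * weightW δ η x
        = Real.exp (-2 * x * t) * x ^ (η - η') * weightW δ η' x := by rw [hsplit]; ring
      _ ≤ constC (η - η') * t ^ (-(η - η')) * weightW δ η' x := by
        gcongr ?_ * _; exact exp_mul_rpow_le_constC hρ ht hx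
      _ ≤ _ := by gcongr; linarith

theorem multiplication_semigroup_smoothing_general
    {V : Type*} [NormedAddCommGroup V]
    (μ : Measure ℝ)
    (δ η η' : ℝ) (hηη' : η' < η)
    (y : ℝ → V)
    (hfin : IntegrableOn (fun x => ‖y x‖ ^ 2 * weightW δ η' x) (Set.Ici 0) μ)
    (t : ℝ) (ht : 0 < t) :
    (∫ x in Set.Ici (0 : ℝ), Real.exp (-2 * x * t) * ‖y x‖ ^ 2 * weightW δ η x ∂μ) ≤
      max (max (μ {0}).toReal 1) (constC (η - η')) * (1 + t ^ (-(η - η'))) *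
        ∫ x in Set.Ici (0 : ℝ), ‖y x‖ ^ 2 * weightW δ η' x ∂μ := by
  set K := max (max (μ {0}).toReal 1) (constC (η - η'))
  have hK : 1 + constC (η - η') * t ^ (-(η - η')) ≤ K * (1 + t ^ (-(η - η'))) := by
    have h1 : 1 ≤ K := le_trans (le_max_right _ 1) (le_max_left _ _)
    have hC : constC (η - η') ≤ K := le_max_right _ _
    have hC0 := constC_nonneg (sub_pos.mpr hηη').le
    have ht0 := Real.rpow_pos_of_pos ht (-(η - η'))
    nlinarith
  rw [← integral_const_mul]
  refine integral_mono_of_nonneg ?_ (hfin.const_mul _) ?_ <;>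
    filter_upwards [ae_restrict_mem measurableSet_Ici] with x (hx : 0 ≤ x)
  · have := weightW_nonneg δ η hx; positivity
  · calc Real.exp (-2 * x * t) * ‖y x‖ ^ 2 * weightW δ η x
        = ‖y x‖ ^ 2 * (Real.exp (-2 * x * t) * weightW δ η x) := by ring
      _ ≤ ‖y x‖ ^ 2 * ((1 + constC (η - η') * t ^ (-(η - η'))) * weightW δ η' x) := by
        gcongr _ * ?_; exact exp_mul_weightW_le δ hηη' ht hx
      _ = (1 + constC (η - η') * t ^ (-(η - η'))) * (‖y x‖ ^ 2 * weightW δ η' x) := by ring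
      _ ≤ K * (1 + t ^ (-(η - η'))) * (‖y x‖ ^ 2 * weightW δ η' x) :=
        mul_le_mul_of_nonneg_right hK (mul_nonneg (sq_nonneg _) (weightW_nonneg δ η' hx))

/-- Let `μ` be a σ-finite Borel measure on `[0,∞)`, `V` a separable Hilbert
space, `δ ∈ ℝ` and `η' < η`.  Then for every strongly measurable `y : [0,∞) → V` with
`|||y|||_{δ,η'} < ∞` and every `t > 0`:
`∫ e^{−2xt} ‖y(x)‖² w_{δ,η}(x) μ(dx)
  ≤ max{μ({0}), 1, C(η−η')} · (1 + t^{−(η−η')}) · |||y|||_{δ,η'}²`. -/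
theorem multiplication_semigroup_smoothing
    {V : Type*} [NormedAddCommGroup V] [InnerProductSpace ℝ V]
    [SecondCountableTopology V] [CompleteSpace V]
    (μ : Measure ℝ) [SigmaFinite μ]
    (δ η η' : ℝ) (hηη' : η' < η)
    (y : ℝ → V) (hy : StronglyMeasurable y)
    (hfin : IntegrableOn (fun x => ‖y x‖ ^ 2 * weightW δ η' x) (Set.Ici 0) μ)
    (t : ℝ) (ht : 0 < t) :
    (∫ x in Set.Ici (0 : ℝ), Real.exp (-2 * x * t) * ‖y x‖ ^ 2 * weightW δ η x ∂μ) ≤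
      max (max (μ {0}).toReal 1) (constC (η - η')) * (1 + t ^ (-(η - η'))) *
        ∫ x in Set.Ici (0 : ℝ), ‖y x‖ ^ 2 * weightW δ η' x ∂μ :=
  multiplication_semigroup_smoothing_general μ δ η η' hηη' y hfin t ht
end

section
/- Let μ be a σ-finite Borel measure on [0,∞), V a separable Hilbert space, and δ_*, η_* ∈ ℝ with ∫_{[0,∞)} w_{δ_*,η_*}(x)^{−1} μ(dx) < ∞. Let δ ≥ δ_* and η ∈ ℝ. Then there exists a constant C > 0 (depending only on μ, δ_*, η_*, δ, η) such that for every strongly measurable y : [0,∞) → V with |||y|||_{δ,η} < ∞ and every t > 0, the function x ↦ e^{−xt} y(x) is Bochner μ-integrable, and G(t) := ∫_{[0,∞)} e^{−xt} y(x) μ(dx) satisfies ‖G(t)‖_V ≤ C · (1 + t^{−max(η_*−η,0)/2}) · |||y|||_{δ,η}. -/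
/-! Cauchy–Schwarz with the weight `w = w_{δ,η}`, splitting `e^{-xt} y(x)` as
`(e^{-xt} w^{-1/2}) · (‖y‖ w^{1/2})`, reduces the claim to a bound on
`∫ e^{-2xt} w_{δ,η}(x)⁻¹ μ(dx)`. Pointwise `w_{δ,η}⁻¹ ≤ max(1,x)^a w_{δ_*,η_*}⁻¹` with
`a = max(η_* - η, 0)`, and `e^{-xt} x^a = e^{-xt} (xt)^a t^{-a} ≤ ⌈a⌉! t^{-a}`, so this integral is
at most `⌈a⌉! (1 + t^{-a}) ∫ w_{δ_*,η_*}⁻¹ dμ`, which is finite by hypothesis. -/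

open MeasureTheory Set

open Real
open scoped Nat

lemma sqrt_add_le_sqrt_add_sqrt {x y : ℝ} (hx : 0 ≤ x) (hy : 0 ≤ y) : √(x + y) ≤ √x + √y := by
  rw [sqrt_le_left (by positivity)]
  nlinarith [sq_sqrt hx, sq_sqrt hy, sqrt_nonneg x, sqrt_nonneg y]

lemma exp_neg_mul_rpow_le_factorial {u a : ℝ} (hu : 0 ≤ u) (ha : 0 ≤ a) :
    exp (-u) * u ^ a ≤ (⌈a⌉₊)! := by
  have hfac : (1 : ℝ) ≤ (⌈a⌉₊)! := by exact_mod_cast (⌈a⌉₊).factorial_pos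
  rcases le_or_gt u 1 with hu1 | hu1
  · calc exp (-u) * u ^ a ≤ 1 * 1 :=
          mul_le_mul (exp_le_one_iff.2 (by linarith)) (rpow_le_one hu hu1 ha) (by positivity)
            zero_le_one
      _ ≤ _ := by rwa [one_mul]
  · calc exp (-u) * u ^ a ≤ exp (-u) * u ^ ⌈a⌉₊ := by
          gcongr
          exact_mod_cast rpow_le_rpow_of_exponent_le hu1.le (Nat.le_ceil a)
      _ ≤ exp (-u) * ((⌈a⌉₊)! * exp u) := by
          gcongr
          exact (div_le_iff₀' (by positivity)).1 (Real.pow_div_factorial_le_exp u hu _)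
      _ = (⌈a⌉₊)! := by rw [mul_left_comm, ← exp_add, neg_add_cancel, exp_zero, mul_one]

lemma exp_neg_mul_mul_max_one_rpow_le {x t a : ℝ} (hx : 0 ≤ x) (ht : 0 < t) (ha : 0 ≤ a) :
    exp (-(x * t)) * max 1 x ^ a ≤ (⌈a⌉₊)! * (1 + t ^ (-a)) := by
  have hfac : (1 : ℝ) ≤ (⌈a⌉₊)! := by exact_mod_cast (⌈a⌉₊).factorial_pos
  have hexp : exp (-(x * t)) ≤ 1 := exp_le_one_iff.2 (by nlinarith)
  rcases le_or_gt x 1 with hx1 | hx1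
  · rw [max_eq_left hx1, one_rpow, mul_one]
    nlinarith [rpow_pos_of_pos ht (-a)]
  · have hxt : x ^ a = (x * t) ^ a * t ^ (-a) := by
      rw [mul_rpow hx ht.le, mul_assoc, ← rpow_add ht, add_neg_cancel, rpow_zero, mul_one]
    have := exp_neg_mul_rpow_le_factorial (by positivity : 0 ≤ x * t) ha
    rw [max_eq_right hx1.le, hxt, ← mul_assoc]
    nlinarith [rpow_pos_of_pos ht (-a)]

section CauchySchwarz

variable {α E : Type*} [MeasurableSpace α] [NormedAddCommGroup E] [NormedSpace ℝ E]
  {ν : Measure α}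

lemma integral_mul_le_sqrt_mul_sqrt {F G : α → ℝ} (hF0 : 0 ≤ᵐ[ν] F)
    (hG0 : 0 ≤ᵐ[ν] G) (hF : MemLp F 2 ν) (hG : MemLp G 2 ν) :
    ∫ x, F x * G x ∂ν ≤ √(∫ x, F x ^ 2 ∂ν) * √(∫ x, G x ^ 2 ∂ν) := by
  have h := integral_mul_le_Lp_mul_Lq_of_nonneg HolderConjugate.two_two hF0 hG0
    (by simpa using hF) (by simpa using hG)
  simpa only [rpow_two, ← sqrt_eq_rpow] using h

theorem integrable_smul_and_norm_integral_smul_le {f w : α → ℝ} {y : α → E}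
    (hw : ∀ᵐ x ∂ν, 0 < w x) (hfm : AEMeasurable f ν) (hwm : AEMeasurable w ν)
    (hym : AEStronglyMeasurable y ν) (hf : Integrable (fun x => f x ^ 2 * (w x)⁻¹) ν)
    (hy : Integrable (fun x => ‖y x‖ ^ 2 * w x) ν) :
    Integrable (fun x => f x • y x) ν ∧
      ‖∫ x, f x • y x ∂ν‖ ≤
        √(∫ x, f x ^ 2 * (w x)⁻¹ ∂ν) * √(∫ x, ‖y x‖ ^ 2 * w x ∂ν) := by
  set F : α → ℝ := fun x => |f x| * √(w x)⁻¹
  set G : α → ℝ := fun x => ‖y x‖ * √(w x)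
  have hF2 : ∀ᵐ x ∂ν, F x ^ 2 = f x ^ 2 * (w x)⁻¹ := by
    filter_upwards [hw] with x hx
    rw [mul_pow, sq_abs, sq_sqrt (inv_nonneg.2 hx.le)]
  have hG2 : ∀ᵐ x ∂ν, G x ^ 2 = ‖y x‖ ^ 2 * w x := by
    filter_upwards [hw] with x hx
    rw [mul_pow, sq_sqrt hx.le]
  have hFG : ∀ᵐ x ∂ν, ‖f x • y x‖ = F x * G x := by
    filter_upwards [hw] with x hx
    rw [norm_smul, norm_eq_abs, mul_mul_mul_comm, ← sqrt_mul (inv_nonneg.2 hx.le),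
      inv_mul_cancel₀ hx.ne', sqrt_one, mul_one]
  have hF : MemLp F 2 ν := (memLp_two_iff_integrable_sq (by fun_prop)).2 (hf.congr (by
    filter_upwards [hF2] with x hx using hx.symm))
  have hG : MemLp G 2 ν := (memLp_two_iff_integrable_sq (by fun_prop)).2 (hy.congr (by
    filter_upwards [hG2] with x hx using hx.symm))
  refine ⟨(hF.integrable_mul hG).mono' (hfm.aestronglyMeasurable.smul hym)
    (hFG.mono fun _ => le_of_eq), ?_⟩
  calc ‖∫ x, f x • y x ∂ν‖ ≤ ∫ x, ‖f x • y x‖ ∂ν := norm_integral_le_integral_norm _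
    _ = ∫ x, F x * G x ∂ν := integral_congr_ae hFG
    _ ≤ √(∫ x, F x ^ 2 ∂ν) * √(∫ x, G x ^ 2 ∂ν) :=
        integral_mul_le_sqrt_mul_sqrt
          (ae_of_all _ fun x => by positivity) (ae_of_all _ fun x => by positivity) hF hG
    _ = _ := by rw [integral_congr_ae hF2, integral_congr_ae hG2]

end CauchySchwarz

lemma weightW_pos {δ η x : ℝ} (hx : 0 ≤ x) : 0 < weightW δ η x := by
  unfold weightW
  split_ifs with h0
  · exact one_pos
  all_goals exact rpow_pos_of_pos (hx.lt_of_ne' h0) _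

@[fun_prop]
lemma measurable_weightW (δ η : ℝ) : Measurable (weightW δ η) :=
  Measurable.ite (measurableSet_singleton 0) measurable_const <|
    Measurable.ite measurableSet_Iic (by fun_prop) (by fun_prop)

lemma inv_weightW_le_max_one_rpow_mul {δs ηs δ η a x : ℝ} (hδ : δs ≤ δ) (ha : ηs - η ≤ a)
    (hx : 0 ≤ x) :
    (weightW δ η x)⁻¹ ≤ max 1 x ^ a * (weightW δs ηs x)⁻¹ := by
  rcases hx.eq_or_lt with rfl | hx
  · simp [weightW]
  rcases le_or_gt x 1 with hx1 | hx1
  · simp only [weightW, hx.ne', hx1, if_false, if_true, max_eq_left hx1, one_rpow, one_mul,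
      ← rpow_neg hx.le, neg_neg]
    exact rpow_le_rpow_of_exponent_ge hx hx1 hδ
  · simp only [weightW, hx.ne', hx1.not_ge, if_false, max_eq_right hx1.le,
      ← rpow_neg hx.le, ← rpow_add hx]
    exact rpow_le_rpow_of_exponent_le hx1.le (by linarith)

lemma exp_sq_mul_inv_weightW_le {δs ηs δ η a x t : ℝ} (hδ : δs ≤ δ) (ha : ηs - η ≤ a)
    (ha0 : 0 ≤ a) (hx : 0 ≤ x) (ht : 0 < t) :
    exp (-(x * t)) ^ 2 * (weightW δ η x)⁻¹ ≤
      (⌈a⌉₊)! * (1 + t ^ (-a)) * (weightW δs ηs x)⁻¹ := by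
  have hexp : exp (-(x * t)) ≤ 1 := exp_le_one_iff.2 (by nlinarith)
  calc exp (-(x * t)) ^ 2 * (weightW δ η x)⁻¹
      ≤ exp (-(x * t)) * (max 1 x ^ a * (weightW δs ηs x)⁻¹) :=
        mul_le_mul (pow_le_of_le_one (exp_pos _).le hexp two_ne_zero)
          (inv_weightW_le_max_one_rpow_mul hδ ha hx) (inv_nonneg.2 (weightW_pos hx).le)
          (exp_pos _).le
    _ = exp (-(x * t)) * max 1 x ^ a * (weightW δs ηs x)⁻¹ := (mul_assoc _ _ _).symm
    _ ≤ _ := mul_le_mul_of_nonneg_right (exp_neg_mul_mul_max_one_rpow_le hx ht ha0)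
        (inv_nonneg.2 (weightW_pos hx).le)

theorem laplace_transform_bound_general
    {V : Type*} [NormedAddCommGroup V] [InnerProductSpace ℝ V]
    (μ : Measure ℝ)
    (δs ηs δ η : ℝ)
    (hws : IntegrableOn (fun x => (weightW δs ηs x)⁻¹) (Set.Ici 0) μ)
    (hδ : δs ≤ δ) :
    ∃ C > (0 : ℝ), ∀ (y : ℝ → V), StronglyMeasurable y →
      IntegrableOn (fun x => ‖y x‖ ^ 2 * weightW δ η x) (Set.Ici 0) μ →
      ∀ t > (0 : ℝ),
        IntegrableOn (fun x => Real.exp (-(x * t)) • y x) (Set.Ici 0) μ ∧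
        ‖∫ x in Set.Ici (0 : ℝ), Real.exp (-(x * t)) • y x ∂μ‖ ≤
          C * (1 + t ^ (-(max (ηs - η) 0) / 2)) *
            Real.sqrt (∫ x in Set.Ici (0 : ℝ), ‖y x‖ ^ 2 * weightW δ η x ∂μ) := by
  set a := max (ηs - η) 0
  set I := ∫ x in Ici 0, (weightW δs ηs x)⁻¹ ∂μ
  have hI : 0 ≤ I :=
    setIntegral_nonneg measurableSet_Ici fun x hx => (inv_pos.2 (weightW_pos hx)).le
  refine ⟨√((⌈a⌉₊)! * I) + 1, by positivity, fun y hy hy2 t ht => ?_⟩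
  have hbound : ∀ᵐ x ∂μ.restrict (Ici 0), ‖exp (-(x * t)) ^ 2 * (weightW δ η x)⁻¹‖ ≤
      (⌈a⌉₊)! * (1 + t ^ (-a)) * (weightW δs ηs x)⁻¹ :=
    ae_restrict_of_forall_mem measurableSet_Ici fun x hx => by
      rw [norm_of_nonneg (mul_nonneg (by positivity) (inv_nonneg.2 (weightW_pos hx).le))]
      exact exp_sq_mul_inv_weightW_le hδ (le_max_left _ _) (le_max_right _ _) hx ht
  have hf : IntegrableOn (fun x => exp (-(x * t)) ^ 2 * (weightW δ η x)⁻¹) (Ici 0) μ :=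
    (hws.const_mul _).mono' (by fun_prop) hbound
  obtain ⟨hint, hnorm⟩ := integrable_smul_and_norm_integral_smul_le
    (ae_restrict_of_forall_mem measurableSet_Ici fun x hx => weightW_pos hx) (by fun_prop)
    (measurable_weightW δ η).aemeasurable hy.aestronglyMeasurable hf hy2
  refine ⟨hint, hnorm.trans (mul_le_mul_of_nonneg_right ?_ (sqrt_nonneg _))⟩
  have hsqrt : √(t ^ (-a)) = t ^ (-a / 2) := by
    rw [sqrt_eq_rpow, ← rpow_mul ht.le]; ring_nf
  calc √(∫ x in Ici 0, exp (-(x * t)) ^ 2 * (weightW δ η x)⁻¹ ∂μ)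
      ≤ √((⌈a⌉₊)! * (1 + t ^ (-a)) * I) := by
        rw [← integral_const_mul]
        exact sqrt_le_sqrt (integral_mono_ae hf (hws.const_mul _)
          (hbound.mono fun x hx => (le_norm_self _).trans hx))
    _ = √((⌈a⌉₊)! * I) * √(1 + t ^ (-a)) := by
        rw [mul_right_comm, sqrt_mul (by positivity)]
    _ ≤ √((⌈a⌉₊)! * I) * (1 + t ^ (-a / 2)) := by
        gcongr
        simpa [hsqrt] using sqrt_add_le_sqrt_add_sqrt zero_le_one (rpow_nonneg ht.le (-a))
    _ ≤ _ := by gcongr; exact le_add_of_nonneg_right zero_le_one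

/-- Let `μ` be a σ-finite Borel measure on `[0,∞)`, `V` a separable Hilbert
space, and `δ_*, η_* ∈ ℝ` with `∫ w_{δ_*,η_*}(x)⁻¹ μ(dx) < ∞`.  Let `δ ≥ δ_*` and `η ∈ ℝ`.
Then there is a constant `C > 0` such that for every strongly measurable `y` with
`|||y|||_{δ,η} < ∞` and every `t > 0`, `x ↦ e^{−xt} y(x)` is Bochner `μ`-integrable and
`G(t) = ∫ e^{−xt} y(x) μ(dx)` satisfies
`‖G(t)‖ ≤ C (1 + t^{−max(η_*−η,0)/2}) |||y|||_{δ,η}`. -/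
theorem laplace_transform_bound
    {V : Type*} [NormedAddCommGroup V] [InnerProductSpace ℝ V]
    [SecondCountableTopology V] [CompleteSpace V]
    (μ : Measure ℝ) [SigmaFinite μ]
    (δs ηs δ η : ℝ)
    (hws : IntegrableOn (fun x => (weightW δs ηs x)⁻¹) (Set.Ici 0) μ)
    (hδ : δs ≤ δ) :
    ∃ C > (0 : ℝ), ∀ (y : ℝ → V), StronglyMeasurable y →
      IntegrableOn (fun x => ‖y x‖ ^ 2 * weightW δ η x) (Set.Ici 0) μ →
      ∀ t > (0 : ℝ),
        IntegrableOn (fun x => Real.exp (-(x * t)) • y x) (Set.Ici 0) μ ∧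
        ‖∫ x in Set.Ici (0 : ℝ), Real.exp (-(x * t)) • y x ∂μ‖ ≤
          C * (1 + t ^ (-(max (ηs - η) 0) / 2)) *
            Real.sqrt (∫ x in Set.Ici (0 : ℝ), ‖y x‖ ^ 2 * weightW δ η x ∂μ) :=
  laplace_transform_bound_general μ δs ηs δ η hws hδ
end

section
/- Let δ, η ∈ ℝ and let (y, y') be as in the context with N_{δ,η}(y) < ∞. Then: (i) for every z ∈ (0,∞), ‖y(z)‖_V ≤ N_{δ,η}(y) · (1 + (∫_{min(1,z)}^{max(1,z)} v_{δ,η}(x)^{−1} dx)^{1/2}); and (ii) if η < 1 then y' is Bochner integrable on (0,1) with ∫_0^1 ‖y'(x)‖_V dx ≤ (1−η)^{−1/2} N_{δ,η}(y), so that y(0) := y(1) − ∫_0^1 y'(x) dx is well defined and satisfies ‖y(0)‖_V ≤ (1 + (1−η)^{−1/2}) · N_{δ,η}(y). -/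
open MeasureTheory Set

/-- The weight function `v_{δ,η}` on `(0,∞)`: `v_{δ,η}(x) = x^{η}` for `x ∈ (0,1]` and
`v_{δ,η}(x) = x^{δ}` for `x ∈ (1,∞)`. -/
noncomputable def weightV (δ η x : ℝ) : ℝ :=
  if x ≤ 1 then x ^ η else x ^ δ

/-!
Everything is Cauchy–Schwarz: writing `‖y'‖ = (‖y'‖ √v) · (√v)⁻¹`, the `L¹` norm of `y'` over a
set is at most its `v`-weighted `L²` norm times `(∫ v⁻¹)^{1/2}`. Applied on the interval between
`1` and `z`, together with `y z = y 1 ± ∫ y'`, this gives (i). For `η < 1` the weight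
`v⁻¹ = x^{-η}` is integrable on `(0,1]` with integral `(1 - η)⁻¹`, which gives (ii).
-/

section WeightedCauchySchwarz

variable {α E : Type*} [MeasurableSpace α] {μ : Measure α} [NormedAddCommGroup E]
  {f : α → E} {w : α → ℝ}

theorem integrable_and_integral_norm_le_of_weighted_sq (hf : AEStronglyMeasurable f μ)
    (hw : AEMeasurable w μ) (hw_pos : ∀ᵐ x ∂μ, 0 < w x)
    (hfw : Integrable (fun x => ‖f x‖ ^ 2 * w x) μ)
    (hw_inv : Integrable (fun x => (w x)⁻¹) μ) :
    Integrable f μ ∧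
      ∫ x, ‖f x‖ ∂μ ≤ √(∫ x, ‖f x‖ ^ 2 * w x ∂μ) * √(∫ x, (w x)⁻¹ ∂μ) := by
  set F : α → ℝ := fun x => ‖f x‖ * √(w x)
  set G : α → ℝ := fun x => √(w x)⁻¹
  have hFG : ∀ᵐ x ∂μ, F x * G x = ‖f x‖ := by
    filter_upwards [hw_pos] with x hx
    simp [F, G, (Real.sqrt_pos.2 hx).ne']
  have hF_sq : ∀ᵐ x ∂μ, F x ^ 2 = ‖f x‖ ^ 2 * w x := by
    filter_upwards [hw_pos] with x hx
    rw [mul_pow, Real.sq_sqrt hx.le]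
  have hG_sq : ∀ᵐ x ∂μ, G x ^ 2 = (w x)⁻¹ := by
    filter_upwards [hw_pos] with x hx
    exact Real.sq_sqrt (inv_nonneg.2 hx.le)
  have hF : MemLp F 2 μ :=
    (memLp_two_iff_integrable_sq (hf.norm.mul hw.sqrt.aestronglyMeasurable)).2
      (hfw.congr (hF_sq.mono fun _ h => h.symm))
  have hG : MemLp G 2 μ :=
    (memLp_two_iff_integrable_sq hw.inv.sqrt.aestronglyMeasurable).2
      (hw_inv.congr (hG_sq.mono fun _ h => h.symm))
  refine ⟨(integrable_norm_iff hf).1 ((hF.integrable_mul hG).congr hFG), ?_⟩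
  have holder := integral_mul_le_Lp_mul_Lq_of_nonneg Real.HolderConjugate.two_two
    (ae_of_all _ fun _ => mul_nonneg (norm_nonneg _) (Real.sqrt_nonneg _))
    (ae_of_all _ fun _ => Real.sqrt_nonneg _)
    (by simpa using hF) (by simpa using hG)
  calc ∫ x, ‖f x‖ ∂μ = ∫ x, F x * G x ∂μ := integral_congr_ae (hFG.mono fun _ h => h.symm)
    _ ≤ (∫ x, F x ^ (2 : ℝ) ∂μ) ^ (1 / 2 : ℝ) * (∫ x, G x ^ (2 : ℝ) ∂μ) ^ (1 / 2 : ℝ) := holder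
    _ = √(∫ x, ‖f x‖ ^ 2 * w x ∂μ) * √(∫ x, (w x)⁻¹ ∂μ) := by
      simp only [Real.rpow_two, ← Real.sqrt_eq_rpow, integral_congr_ae hF_sq,
        integral_congr_ae hG_sq]

end WeightedCauchySchwarz

theorem aestronglyMeasurable_restrict_Ioc_of_forall_lt {E : Type*} [NormedAddCommGroup E]
    {f : ℝ → E} {a b : ℝ} (hf : ∀ c, a < c → IntegrableOn f (Ioc c b)) :
    AEStronglyMeasurable f (volume.restrict (Ioc a b)) := by
  refine (aestronglyMeasurable_iUnion_iff.2 fun n : ℕ =>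
    (hf (a + 1 / (n + 1)) (lt_add_of_pos_right a (by positivity))).aestronglyMeasurable).mono_set ?_
  intro x hx
  obtain ⟨n, hn⟩ := exists_nat_one_div_lt (sub_pos.2 hx.1)
  exact mem_iUnion.2 ⟨n, by linarith, hx.2⟩

section Weight

variable {δ η : ℝ}

theorem weightV_pos {x : ℝ} (hx : 0 < x) : 0 < weightV δ η x := by
  unfold weightV; split <;> exact Real.rpow_pos_of_pos hx _

theorem measurable_weightV : Measurable (weightV δ η) :=
  Measurable.ite measurableSet_Iic (measurable_id.pow_const η) (measurable_id.pow_const δ)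

theorem continuousOn_weightV : ContinuousOn (weightV δ η) (Ioi 0) := by
  refine ContinuousOn.if (fun x hx => ?_) ?_ ?_
  · -- both branches equal `1` on the frontier `{1}`
    have hx1 : x = 1 := by simpa [show {x : ℝ | x ≤ 1} = Iic 1 from rfl] using hx.2
    simp [hx1]
  all_goals exact continuousOn_id.rpow_const fun _ hx => Or.inl (ne_of_gt hx.1)

theorem integrableOn_inv_weightV_Ioc {a b : ℝ} (ha : 0 < a) :
    IntegrableOn (fun x => (weightV δ η x)⁻¹) (Ioc a b) :=
  ((continuousOn_weightV.mono fun _ hx => ha.trans_le hx.1).inv₀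
    (fun _ hx => (weightV_pos (ha.trans_le hx.1)).ne')).integrableOn_Icc.mono_set
    Ioc_subset_Icc_self

theorem inv_weightV_eqOn_Ioc_zero_one :
    EqOn (fun x => (weightV δ η x)⁻¹) (fun x => x ^ (-η)) (Ioc 0 1) := fun x hx => by
  simp [weightV, hx.2, Real.rpow_neg hx.1.le]

theorem integrableOn_inv_weightV_Ioc_zero_one (hη : η < 1) :
    IntegrableOn (fun x => (weightV δ η x)⁻¹) (Ioc 0 1) :=
  ((intervalIntegral.intervalIntegrable_rpow' (by linarith : -1 < -η)).1).congr_fun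
    inv_weightV_eqOn_Ioc_zero_one.symm measurableSet_Ioc

theorem integral_inv_weightV_Ioc_zero_one (hη : η < 1) :
    ∫ x in Ioc 0 1, (weightV δ η x)⁻¹ = (1 - η)⁻¹ := by
  rw [setIntegral_congr_fun measurableSet_Ioc inv_weightV_eqOn_Ioc_zero_one,
    ← intervalIntegral.integral_of_le zero_le_one,
    integral_rpow (Or.inl (by linarith : -1 < -η)),
    Real.zero_rpow (by linarith : -η + 1 ≠ 0), Real.one_rpow]
  ring

end Weight

section WeightedDerivative

variable {V : Type*} [NormedAddCommGroup V] {δ η : ℝ} {y y' : ℝ → V}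

theorem integrableOn_and_integral_norm_le_of_weightV {s : Set ℝ} (hs : MeasurableSet s)
    (hs0 : s ⊆ Ioi 0) (hy' : AEStronglyMeasurable y' (volume.restrict s))
    (hfin : IntegrableOn (fun x => ‖y' x‖ ^ 2 * weightV δ η x) (Ioi 0))
    (hinv : IntegrableOn (fun x => (weightV δ η x)⁻¹) s) :
    IntegrableOn y' s ∧
      ∫ x in s, ‖y' x‖ ≤
        √(∫ x in Ioi 0, ‖y' x‖ ^ 2 * weightV δ η x) * √(∫ x in s, (weightV δ η x)⁻¹) := by
  obtain ⟨hint, hle⟩ := integrable_and_integral_norm_le_of_weighted_sq hy'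
    measurable_weightV.aemeasurable
    (ae_restrict_of_forall_mem hs fun x hx => weightV_pos (hs0 hx)) (hfin.mono_set hs0) hinv
  refine ⟨hint, hle.trans (mul_le_mul_of_nonneg_right (Real.sqrt_le_sqrt ?_) (Real.sqrt_nonneg _))⟩
  exact setIntegral_mono_set hfin
    (ae_restrict_of_forall_mem measurableSet_Ioi fun x hx =>
      mul_nonneg (sq_nonneg _) (weightV_pos hx).le) hs0.eventuallyLE

theorem norm_sub_le_of_weightV [NormedSpace ℝ V] {a b : ℝ} (ha : 0 < a) (hab : a ≤ b)
    (hy' : IntegrableOn y' (Ioc a b)) (hftc : y b - y a = ∫ x in a..b, y' x)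
    (hfin : IntegrableOn (fun x => ‖y' x‖ ^ 2 * weightV δ η x) (Ioi 0)) :
    ‖y b - y a‖ ≤
      √(∫ x in Ioi 0, ‖y' x‖ ^ 2 * weightV δ η x) * √(∫ x in Ioc a b, (weightV δ η x)⁻¹) := by
  rw [hftc, intervalIntegral.integral_of_le hab]
  exact (norm_integral_le_integral_norm _).trans
    (integrableOn_and_integral_norm_le_of_weightV measurableSet_Ioc
      (fun _ hx => ha.trans hx.1) hy'.aestronglyMeasurable hfin
      (integrableOn_inv_weightV_Ioc ha)).2

end WeightedDerivative

theorem filipovic_point_evaluation_bounded_general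
    {V : Type*} [NormedAddCommGroup V] [InnerProductSpace ℝ V]
    (δ η : ℝ) (y y' : ℝ → V)
    (hloc : ∀ a b : ℝ, 0 < a → IntegrableOn y' (Set.Ioc a b))
    (hftc : ∀ a b : ℝ, 0 < a → a ≤ b → y b - y a = ∫ x in a..b, y' x)
    (hfin : IntegrableOn (fun x => ‖y' x‖ ^ 2 * weightV δ η x) (Set.Ioi 0)) :
    (∀ z : ℝ, 0 < z →
        ‖y z‖ ≤
          Real.sqrt (‖y 1‖ ^ 2 + ∫ x in Set.Ioi (0 : ℝ), ‖y' x‖ ^ 2 * weightV δ η x) *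
            (1 + Real.sqrt (∫ x in Set.Ioc (min 1 z) (max 1 z), (weightV δ η x)⁻¹))) ∧
      (η < 1 →
        IntegrableOn y' (Set.Ioc 0 1) ∧
        (∫ x in Set.Ioc (0 : ℝ) 1, ‖y' x‖) ≤
          (1 - η) ^ (-(1 / 2 : ℝ)) *
            Real.sqrt (‖y 1‖ ^ 2 + ∫ x in Set.Ioi (0 : ℝ), ‖y' x‖ ^ 2 * weightV δ η x) ∧
        ‖y 1 - ∫ x in Set.Ioc (0 : ℝ) 1, y' x‖ ≤
          (1 + (1 - η) ^ (-(1 / 2 : ℝ))) *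
            Real.sqrt (‖y 1‖ ^ 2 + ∫ x in Set.Ioi (0 : ℝ), ‖y' x‖ ^ 2 * weightV δ η x)) := by
  set I := ∫ x in Ioi (0 : ℝ), ‖y' x‖ ^ 2 * weightV δ η x
  set N := √(‖y 1‖ ^ 2 + I)
  have hI : 0 ≤ I := setIntegral_nonneg measurableSet_Ioi fun x hx =>
    mul_nonneg (sq_nonneg _) (weightV_pos hx).le
  have hy1 : ‖y 1‖ ≤ N := Real.le_sqrt_of_sq_le (le_add_of_nonneg_right hI)
  have hIN : √I ≤ N := Real.sqrt_le_sqrt (le_add_of_nonneg_left (sq_nonneg _))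
  refine ⟨fun z hz => ?_, fun hη => ?_⟩
  · have hdiff : ‖y z - y 1‖ = ‖y (max 1 z) - y (min 1 z)‖ := by
      rcases le_total z 1 with h | h <;> simp [h, norm_sub_rev]
    have hbound := norm_sub_le_of_weightV (lt_min one_pos hz) min_le_max
      (hloc _ _ (lt_min one_pos hz)) (hftc _ _ (lt_min one_pos hz) min_le_max) hfin
    calc ‖y z‖ ≤ ‖y 1‖ + ‖y z - y 1‖ := norm_le_insert' _ _
      _ ≤ N + N * √(∫ x in Ioc (min 1 z) (max 1 z), (weightV δ η x)⁻¹) := by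
        rw [hdiff]
        exact add_le_add hy1 (hbound.trans (mul_le_mul_of_nonneg_right hIN (Real.sqrt_nonneg _)))
      _ = _ := by ring
  · obtain ⟨hint, hle⟩ := integrableOn_and_integral_norm_le_of_weightV measurableSet_Ioc
      (fun _ hx => hx.1) (aestronglyMeasurable_restrict_Ioc_of_forall_lt fun c hc => hloc c 1 hc)
      hfin (integrableOn_inv_weightV_Ioc_zero_one hη)
    have hsqrt : √(1 - η)⁻¹ = (1 - η) ^ (-(1 / 2 : ℝ)) := by
      rw [Real.sqrt_inv, Real.sqrt_eq_rpow, Real.rpow_neg (by linarith)]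
    have hL1 : ∫ x in Ioc 0 1, ‖y' x‖ ≤ (1 - η) ^ (-(1 / 2 : ℝ)) * N := by
      rw [integral_inv_weightV_Ioc_zero_one hη, hsqrt, mul_comm] at hle
      exact hle.trans (mul_le_mul_of_nonneg_left hIN (by positivity))
    refine ⟨hint, hL1, ?_⟩
    calc ‖y 1 - ∫ x in Ioc 0 1, y' x‖ ≤ ‖y 1‖ + ∫ x in Ioc 0 1, ‖y' x‖ :=
          (norm_sub_le _ _).trans (add_le_add_right (norm_integral_le_integral_norm _) _)
      _ ≤ N + (1 - η) ^ (-(1 / 2 : ℝ)) * N := add_le_add hy1 hL1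
      _ = _ := by ring

/-- Let `δ, η ∈ ℝ` and let `(y, y')` be a pair with `y'` locally Bochner
integrable on `(0,∞)`, `y(b) − y(a) = ∫_a^b y'`, and `N_{δ,η}(y) < ∞`, where
`N_{δ,η}(y)² = ‖y(1)‖² + ∫_0^∞ ‖y'(x)‖² v_{δ,η}(x) dx`.  Then:
(i) for every `z ∈ (0,∞)`,
  `‖y(z)‖ ≤ N_{δ,η}(y) (1 + (∫_{min(1,z)}^{max(1,z)} v_{δ,η}(x)⁻¹ dx)^{1/2})`;
(ii) if `η < 1` then `y'` is Bochner integrable on `(0,1)` with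
  `∫_0^1 ‖y'‖ ≤ (1−η)^{−1/2} N_{δ,η}(y)`, so that `y(0) := y(1) − ∫_0^1 y'` satisfies
  `‖y(0)‖ ≤ (1 + (1−η)^{−1/2}) N_{δ,η}(y)`. -/
theorem filipovic_point_evaluation_bounded
    {V : Type*} [NormedAddCommGroup V] [InnerProductSpace ℝ V]
    [SecondCountableTopology V] [CompleteSpace V]
    (δ η : ℝ) (y y' : ℝ → V)
    (hloc : ∀ a b : ℝ, 0 < a → IntegrableOn y' (Set.Ioc a b))
    (hftc : ∀ a b : ℝ, 0 < a → a ≤ b → y b - y a = ∫ x in a..b, y' x)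
    (hfin : IntegrableOn (fun x => ‖y' x‖ ^ 2 * weightV δ η x) (Set.Ioi 0)) :
    (∀ z : ℝ, 0 < z →
        ‖y z‖ ≤
          Real.sqrt (‖y 1‖ ^ 2 + ∫ x in Set.Ioi (0 : ℝ), ‖y' x‖ ^ 2 * weightV δ η x) *
            (1 + Real.sqrt (∫ x in Set.Ioc (min 1 z) (max 1 z), (weightV δ η x)⁻¹))) ∧
      (η < 1 →
        IntegrableOn y' (Set.Ioc 0 1) ∧
        (∫ x in Set.Ioc (0 : ℝ) 1, ‖y' x‖) ≤
          (1 - η) ^ (-(1 / 2 : ℝ)) *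
            Real.sqrt (‖y 1‖ ^ 2 + ∫ x in Set.Ioi (0 : ℝ), ‖y' x‖ ^ 2 * weightV δ η x) ∧
        ‖y 1 - ∫ x in Set.Ioc (0 : ℝ) 1, y' x‖ ≤
          (1 + (1 - η) ^ (-(1 / 2 : ℝ))) *
            Real.sqrt (‖y 1‖ ^ 2 + ∫ x in Set.Ioi (0 : ℝ), ‖y' x‖ ^ 2 * weightV δ η x)) :=
  filipovic_point_evaluation_bounded_general δ η y y' hloc hftc hfin
end

section
/- Let 0 ≤ δ ≤ δ', 0 ≤ η ≤ η' and T > 0. Then there exists a constant C = C(T, δ, δ', η, η') > 0 such that for every pair (y, y') as in the context with N_{δ',η'}(y) < ∞ and every t ∈ (0, T]: ‖y(1+t)‖_V² + ∫_0^∞ ‖y'(x+t)‖_V² v_{δ,η}(x) dx ≤ C · (1 + t^{−(η'−η)}) · N_{δ',η'}(y)². (This expresses the smoothing bound ‖S(t)‖ ≲ 1 + t^{−(η'−η)/2} for the shift semigroup S(t)y(x) = y(x+t) from the modified Filipović space with weight v_{δ',η'} into the one with weight v_{δ,η}.) -/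
/-!
The integral term is handled pointwise: `v_{δ,η}(x) ≤ (1 + t^{-(η'-η)}) v_{δ',η'}(x + t)`, the
factor `t^{-(η'-η)}` being needed only where `x + t ≤ 1`, since there `(x + t)^{η-η'} ≤ t^{η-η'}`;
after the substitution `x ↦ x + t` the shifted integral is bounded by the unshifted one.
For the point value, `y(1+t) = y(1) + ∫_1^{1+t} y'` and Cauchy–Schwarz give
`‖y(1+t)‖² ≤ 2‖y(1)‖² + 2t ∫_1^{1+t} ‖y'‖²`, and the last integral is bounded by the weighted one
because `v_{δ',η'} ≥ 1` on `(1, ∞)`.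
-/

open MeasureTheory Set

theorem weightV_nonneg (δ η : ℝ) {x : ℝ} (hx : 0 ≤ x) : 0 ≤ weightV δ η x := by
  unfold weightV; split <;> exact Real.rpow_nonneg hx _

theorem one_le_weightV {δ x : ℝ} (η : ℝ) (hδ : 0 ≤ δ) (hx : 1 < x) : 1 ≤ weightV δ η x := by
  rw [weightV, if_neg hx.not_ge]
  exact Real.one_le_rpow hx.le hδ

theorem weightV_le_mul_weightV_add {δ δ' η η' x t : ℝ} (hδ0 : 0 ≤ δ) (hδ : δ ≤ δ')
    (hη0 : 0 ≤ η) (hη : η ≤ η') (hx : 0 < x) (ht : 0 < t) :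
    weightV δ η x ≤ (1 + t ^ (-(η' - η))) * weightV δ' η' (x + t) := by
  have hxt : 0 < x + t := by linarith
  by_cases hxt1 : x + t ≤ 1
  · have hx1 : x ≤ 1 := by linarith
    rw [weightV, weightV, if_pos hx1, if_pos hxt1]
    calc x ^ η ≤ (x + t) ^ η := Real.rpow_le_rpow hx.le (by linarith) hη0
      _ = (x + t) ^ (-(η' - η)) * (x + t) ^ η' := by
        rw [← Real.rpow_add hxt]; ring_nf
      _ ≤ t ^ (-(η' - η)) * (x + t) ^ η' := mul_le_mul_of_nonneg_right
        (Real.rpow_le_rpow_of_nonpos ht (by linarith) (by linarith)) (Real.rpow_nonneg hxt.le _)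
      _ ≤ (1 + t ^ (-(η' - η))) * (x + t) ^ η' :=
        mul_le_mul_of_nonneg_right (by linarith) (Real.rpow_nonneg hxt.le _)
  · have h1 : weightV δ η x ≤ weightV δ' η' (x + t) := by
      rw [weightV, weightV, if_neg hxt1]
      split_ifs with hx1
      · calc x ^ η ≤ 1 := Real.rpow_le_one hx.le hx1 hη0
          _ ≤ (x + t) ^ δ' := Real.one_le_rpow (by linarith) (hδ0.trans hδ)
      · calc x ^ δ ≤ (x + t) ^ δ := Real.rpow_le_rpow hx.le (by linarith) hδ0
          _ ≤ (x + t) ^ δ' := Real.rpow_le_rpow_of_exponent_le (by linarith) hδ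
    exact h1.trans (le_mul_of_one_le_left (weightV_nonneg δ' η' hxt.le)
      (le_add_of_nonneg_right (Real.rpow_nonneg ht.le _)))

theorem sq_setIntegral_le_measureReal_mul_setIntegral_sq {α : Type*} [MeasurableSpace α]
    {μ : Measure α} {s : Set α} (hs : μ s ≠ ⊤) {f : α → ℝ}
    (hf : AEStronglyMeasurable f (μ.restrict s)) (hf2 : IntegrableOn (fun x => f x ^ 2) s μ) :
    (∫ x in s, f x ∂μ) ^ 2 ≤ μ.real s * ∫ x in s, f x ^ 2 ∂μ := by
  rcases eq_or_ne (μ s) 0 with h0 | h0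
  · simp [Measure.restrict_eq_zero.mpr h0]
  have hfi : IntegrableOn f s μ := by
    have : IsFiniteMeasure (μ.restrict s) := isFiniteMeasure_restrict.mpr hs
    exact ((memLp_two_iff_integrable_sq hf).mpr hf2).integrable one_le_two
  have hjensen := (even_two.convexOn_pow (𝕜 := ℝ)).map_set_average_le
    (continuous_pow 2).continuousOn isClosed_univ h0 hs
    (Filter.Eventually.of_forall fun _ => mem_univ _) hfi hf2
  have hm : 0 < μ.real s := ENNReal.toReal_pos h0 hs
  simp only [setAverage_eq, smul_eq_mul] at hjensen
  rw [mul_pow, inv_pow] at hjensen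
  have := mul_le_mul_of_nonneg_left hjensen (sq_nonneg (μ.real s))
  field_simp at this
  linarith

theorem setIntegral_Ioi_comp_add_right {E : Type*} [NormedAddCommGroup E] [NormedSpace ℝ E]
    (f : ℝ → E) (a t : ℝ) : ∫ x in Ioi a, f (x + t) = ∫ x in Ioi (a + t), f x := by
  have h := (measurePreserving_add_right volume t).setIntegral_preimage_emb
    (measurableEmbedding_addRight t) f (Ioi (a + t))
  rwa [preimage_add_const_Ioi, add_sub_cancel_right] at h

theorem integrableOn_Ioi_comp_add_right {E : Type*} [NormedAddCommGroup E]
    {f : ℝ → E} {a t : ℝ} (hf : IntegrableOn f (Ioi (a + t))) :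
    IntegrableOn (fun x => f (x + t)) (Ioi a) := by
  have h := (measurePreserving_add_right volume t).integrableOn_comp_preimage
    (measurableEmbedding_addRight t) (f := f) (s := Ioi (a + t))
  rw [preimage_add_const_Ioi, add_sub_cancel_right] at h
  exact h.mpr hf

theorem integrableOn_Ioc_of_integrableOn_mul_weightV {δ η b : ℝ} {g : ℝ → ℝ} (hδ : 0 ≤ δ)
    (hgm : AEStronglyMeasurable g (volume.restrict (Ioc 1 b)))
    (hgi : IntegrableOn (fun x => g x * weightV δ η x) (Ioi 0)) : IntegrableOn g (Ioc 1 b) := by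
  have hsub : Ioc 1 b ⊆ Ioi (0 : ℝ) := fun x hx => zero_lt_one.trans hx.1
  refine Integrable.mono (hgi.mono_set hsub) hgm ?_
  refine ae_restrict_of_forall_mem measurableSet_Ioc fun x hx => ?_
  rw [norm_mul]
  exact le_mul_of_one_le_right (norm_nonneg _) ((one_le_weightV η hδ hx.1).trans (le_abs_self _))

theorem setIntegral_Ioc_le_setIntegral_mul_weightV {δ η b : ℝ} {g : ℝ → ℝ} (hδ : 0 ≤ δ)
    (hg : ∀ x, 0 ≤ g x) (hgi : IntegrableOn (fun x => g x * weightV δ η x) (Ioi 0)) :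
    ∫ x in Ioc 1 b, g x ≤ ∫ x in Ioi 0, g x * weightV δ η x := by
  have hsub : Ioc 1 b ⊆ Ioi (0 : ℝ) := fun x hx => zero_lt_one.trans hx.1
  calc ∫ x in Ioc 1 b, g x ≤ ∫ x in Ioc 1 b, g x * weightV δ η x := by
        refine integral_mono_of_nonneg (Filter.Eventually.of_forall hg) (hgi.mono_set hsub) ?_
        refine ae_restrict_of_forall_mem measurableSet_Ioc fun x hx => ?_
        exact le_mul_of_one_le_right (hg x) (one_le_weightV η hδ hx.1)
    _ ≤ ∫ x in Ioi 0, g x * weightV δ η x :=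
        setIntegral_mono_set hgi
          (ae_restrict_of_forall_mem measurableSet_Ioi (fun x hx =>
            mul_nonneg (hg x) (weightV_nonneg δ η (le_of_lt hx))))
          hsub.eventuallyLE

theorem setIntegral_comp_add_mul_weightV_le {δ δ' η η' t : ℝ} {g : ℝ → ℝ} (hδ0 : 0 ≤ δ)
    (hδ : δ ≤ δ') (hη0 : 0 ≤ η) (hη : η ≤ η') (ht : 0 < t) (hg : ∀ x, 0 ≤ g x)
    (hgi : IntegrableOn (fun x => g x * weightV δ' η' x) (Ioi 0)) :
    ∫ x in Ioi 0, g (x + t) * weightV δ η x ≤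
      (1 + t ^ (-(η' - η))) * ∫ x in Ioi 0, g x * weightV δ' η' x := by
  set K := 1 + t ^ (-(η' - η))
  have hK : 0 ≤ K := by positivity
  have hshift : IntegrableOn (fun x => g (x + t) * weightV δ' η' (x + t)) (Ioi 0) :=
    integrableOn_Ioi_comp_add_right (hgi.mono_set (Ioi_subset_Ioi (by linarith)))
  calc ∫ x in Ioi 0, g (x + t) * weightV δ η x
      ≤ ∫ x in Ioi 0, K * (g (x + t) * weightV δ' η' (x + t)) := by
        refine integral_mono_of_nonneg ?_ (hshift.const_mul K) ?_
        · refine ae_restrict_of_forall_mem measurableSet_Ioi fun x hx => ?_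
          exact mul_nonneg (hg _) (weightV_nonneg δ η (le_of_lt hx))
        · refine ae_restrict_of_forall_mem measurableSet_Ioi fun x hx => ?_
          calc g (x + t) * weightV δ η x ≤ g (x + t) * (K * weightV δ' η' (x + t)) :=
                mul_le_mul_of_nonneg_left (weightV_le_mul_weightV_add hδ0 hδ hη0 hη hx ht) (hg _)
            _ = K * (g (x + t) * weightV δ' η' (x + t)) := mul_left_comm _ _ _
    _ = K * ∫ x in Ioi t, g x * weightV δ' η' x := by
        rw [integral_const_mul, setIntegral_Ioi_comp_add_right (fun x => g x * weightV δ' η' x),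
          zero_add]
    _ ≤ K * ∫ x in Ioi 0, g x * weightV δ' η' x := by
        refine mul_le_mul_of_nonneg_left (setIntegral_mono_set hgi ?_ ?_) hK
        · exact ae_restrict_of_forall_mem measurableSet_Ioi (fun x hx =>
            mul_nonneg (hg x) (weightV_nonneg δ' η' (le_of_lt hx)))
        · exact (Ioi_subset_Ioi ht.le).eventuallyLE

theorem norm_sq_le_of_sub_eq_integral {V : Type*} [NormedAddCommGroup V] [NormedSpace ℝ V]
    {y y' : ℝ → V} {a b : ℝ} (hab : a ≤ b) (hy : y b - y a = ∫ x in a..b, y' x)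
    (hm : AEStronglyMeasurable y' (volume.restrict (Ioc a b)))
    (hsq : IntegrableOn (fun x => ‖y' x‖ ^ 2) (Ioc a b)) :
    ‖y b‖ ^ 2 ≤ 2 * ‖y a‖ ^ 2 + 2 * (b - a) * ∫ x in Ioc a b, ‖y' x‖ ^ 2 := by
  set J := ∫ x in Ioc a b, ‖y' x‖
  have hJ : ‖y b‖ ≤ ‖y a‖ + J := by
    rw [← sub_add_cancel (y b) (y a), hy, add_comm, intervalIntegral.integral_of_le hab]
    exact (norm_add_le _ _).trans (add_le_add_right (norm_integral_le_integral_norm _) _)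
  have hJ2 : J ^ 2 ≤ (b - a) * ∫ x in Ioc a b, ‖y' x‖ ^ 2 := by
    simpa [Real.volume_real_Ioc_of_le hab] using
      sq_setIntegral_le_measureReal_mul_setIntegral_sq measure_Ioc_lt_top.ne hm.norm hsq
  have hJ0 : 0 ≤ J := setIntegral_nonneg measurableSet_Ioc fun x _ => norm_nonneg _
  nlinarith [norm_nonneg (y a), norm_nonneg (y b), sq_nonneg (‖y a‖ - J)]

theorem shift_semigroup_smoothing_general
    {V : Type*} [NormedAddCommGroup V] [InnerProductSpace ℝ V]
    (δ δ' η η' T : ℝ)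
    (hδ0 : 0 ≤ δ) (hδ : δ ≤ δ') (hη0 : 0 ≤ η) (hη : η ≤ η') (hT : 0 < T) :
    ∃ C > (0 : ℝ), ∀ (y y' : ℝ → V),
      (∀ a b : ℝ, 0 < a → IntegrableOn y' (Set.Ioc a b)) →
      (∀ a b : ℝ, 0 < a → a ≤ b → y b - y a = ∫ x in a..b, y' x) →
      IntegrableOn (fun x => ‖y' x‖ ^ 2 * weightV δ' η' x) (Set.Ioi 0) →
      ∀ t ∈ Set.Ioc (0 : ℝ) T,
        ‖y (1 + t)‖ ^ 2 + (∫ x in Set.Ioi (0 : ℝ), ‖y' (x + t)‖ ^ 2 * weightV δ η x) ≤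
          C * (1 + t ^ (-(η' - η))) *
            (‖y 1‖ ^ 2 + ∫ x in Set.Ioi (0 : ℝ), ‖y' x‖ ^ 2 * weightV δ' η' x) := by
  refine ⟨2 * (T + 1), by positivity, fun y y' hloc hFTC hInt t ⟨ht, htT⟩ => ?_⟩
  have hδ'0 : 0 ≤ δ' := hδ0.trans hδ
  have hm : AEStronglyMeasurable y' (volume.restrict (Ioc 1 (1 + t))) :=
    (hloc 1 (1 + t) one_pos).aestronglyMeasurable
  have hbdry := norm_sq_le_of_sub_eq_integral (by linarith) (hFTC 1 (1 + t) one_pos (by linarith))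
    hm (integrableOn_Ioc_of_integrableOn_mul_weightV hδ'0 (hm.norm.pow 2) hInt)
  have hS := setIntegral_Ioc_le_setIntegral_mul_weightV (b := 1 + t) hδ'0
    (fun x => sq_nonneg ‖y' x‖) hInt
  have hshift := setIntegral_comp_add_mul_weightV_le hδ0 hδ hη0 hη ht
    (fun x => sq_nonneg ‖y' x‖) hInt
  set K := 1 + t ^ (-(η' - η))
  set I := ∫ x in Ioi 0, ‖y' x‖ ^ 2 * weightV δ' η' x
  have hK : 1 ≤ K := le_add_of_nonneg_right (Real.rpow_nonneg ht.le _)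
  have hI : 0 ≤ I := setIntegral_nonneg measurableSet_Ioi fun x hx =>
    mul_nonneg (sq_nonneg _) (weightV_nonneg δ' η' (le_of_lt hx))
  have ha : 0 ≤ ‖y 1‖ ^ 2 := sq_nonneg _
  rw [add_sub_cancel_left] at hbdry
  calc ‖y (1 + t)‖ ^ 2 + ∫ x in Ioi 0, ‖y' (x + t)‖ ^ 2 * weightV δ η x
      ≤ (2 * ‖y 1‖ ^ 2 + 2 * T * I) + K * I :=
        add_le_add (hbdry.trans (by gcongr)) hshift
    _ ≤ 2 * (T + 1) * K * (‖y 1‖ ^ 2 + I) := by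
        nlinarith [mul_nonneg ha (sub_nonneg.2 hK), mul_nonneg hI (sub_nonneg.2 hK),
          mul_nonneg (mul_nonneg hT.le ha) (sub_nonneg.2 hK),
          mul_nonneg (mul_nonneg hT.le hI) (sub_nonneg.2 hK)]

/-- Let `0 ≤ δ ≤ δ'`, `0 ≤ η ≤ η'` and `T > 0`.  Then there exists a
constant `C = C(T,δ,δ',η,η') > 0` such that for every pair `(y,y')` (with `y'` locally
Bochner integrable, `y(b) − y(a) = ∫_a^b y'` and `N_{δ',η'}(y) < ∞`) and every
`t ∈ (0,T]`:
`‖y(1+t)‖² + ∫_0^∞ ‖y'(x+t)‖² v_{δ,η}(x) dx ≤ C (1 + t^{−(η'−η)}) N_{δ',η'}(y)²`. -/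
theorem shift_semigroup_smoothing
    {V : Type*} [NormedAddCommGroup V] [InnerProductSpace ℝ V]
    [SecondCountableTopology V] [CompleteSpace V]
    (δ δ' η η' T : ℝ)
    (hδ0 : 0 ≤ δ) (hδ : δ ≤ δ') (hη0 : 0 ≤ η) (hη : η ≤ η') (hT : 0 < T) :
    ∃ C > (0 : ℝ), ∀ (y y' : ℝ → V),
      (∀ a b : ℝ, 0 < a → IntegrableOn y' (Set.Ioc a b)) →
      (∀ a b : ℝ, 0 < a → a ≤ b → y b - y a = ∫ x in a..b, y' x) →
      IntegrableOn (fun x => ‖y' x‖ ^ 2 * weightV δ' η' x) (Set.Ioi 0) →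
      ∀ t ∈ Set.Ioc (0 : ℝ) T,
        ‖y (1 + t)‖ ^ 2 + (∫ x in Set.Ioi (0 : ℝ), ‖y' (x + t)‖ ^ 2 * weightV δ η x) ≤
          C * (1 + t ^ (-(η' - η))) *
            (‖y 1‖ ^ 2 + ∫ x in Set.Ioi (0 : ℝ), ‖y' x‖ ^ 2 * weightV δ' η' x) :=
  shift_semigroup_smoothing_general δ δ' η η' T hδ0 hδ hη0 hη hT
end
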